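/- The family of operators (R_u R_v*)_{(u,v) ∈ M×M} on ℓ²(M), indexed by pairs of words u, v in the free monoid M on two generators, is linearly independent in B(ℓ²(M)): any finite linear combination ∑ λ_{u,v} R_u R_v* that equals the zero operator has all coefficients λ_{u,v} = 0. -/

import Mathlib

/-!
The coefficient `⟪δ x, R u (R v)* δ w⟫` is `1` when `(x, w) = (c u, c v)` for some word `c` and
`0` otherwise. Hence the coefficient at `(δ u, δ v)` is `1` on `R u (R v)*` and vanishes on
`R u' (R v')*` unless `(u, v) = (c u', c v')`, which for `(u', v') ≠ (u, v)` forces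
`|u'| + |v'| < |u| + |v|`: the family is triangular with respect to total length.
-/

noncomputable section

/-- The free monoid on two generators `a`, `b`. -/
abbrev M2 : Type := FreeMonoid (Fin 2)

abbrev l2M : Type := lp (fun _ : M2 => ℂ) 2

instance : DecidableEq M2 := Classical.decEq _

/-- The standard basis vector δ_w of ℓ²(M). -/
def δ (w : M2) : l2M := lp.single 2 w 1

theorem linearIndependent_of_triangular {ι R E : Type*} [CommRing R] [NoZeroDivisors R]
    [AddCommGroup E] [Module R E] (v : ι → E) (φ : ι → E →ₗ[R] R) (μ : ι → ℕ)
    (hdiag : ∀ i, φ i (v i) ≠ 0) (htri : ∀ i j, φ i (v j) ≠ 0 → j = i ∨ μ j < μ i) :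
    LinearIndependent R v := by
  classical
  rw [linearIndependent_iff']
  intro s g hsum i
  induction i using (measure μ).wf.induction with
  | h i ih =>
    intro hi
    have h0 : ∑ j ∈ s, g j * φ i (v j) = 0 := by
      simpa only [map_sum, map_smul, smul_eq_mul, map_zero] using congrArg (φ i) hsum
    rw [Finset.sum_eq_single_of_mem i hi] at h0
    · exact (mul_eq_zero.mp h0).resolve_right (hdiag i)
    · intro j hj hji
      by_cases hφ : φ i (v j) = 0
      · rw [hφ, mul_zero]
      · rcases htri i j hφ with rfl | hlt
        · exact absurd rfl hji
        · rw [ih j hlt hj, zero_mul]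

lemma δ_apply (w x : M2) : δ w x = if x = w then 1 else 0 := by
  simp [δ, lp.single_apply, Pi.single_apply]

lemma inner_δ_left (x : M2) (f : l2M) : inner ℂ (δ x) f = f x := by
  simp [δ, lp.inner_single_left]

lemma FreeMonoid.eq_one_or_length_lt_length_mul {α : Type*} (c w : FreeMonoid α) :
    c = 1 ∨ w.length < (c * w).length := by
  rcases eq_or_ne c 1 with rfl | hc
  · exact .inl rfl
  · have : c.length ≠ 0 := fun h => hc (FreeMonoid.length_eq_zero.mp h)
    rw [FreeMonoid.length_mul]
    omega

def matrixCoeff (x w : M2) : (l2M →L[ℂ] l2M) →ₗ[ℂ] ℂ :=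
  (innerSL ℂ (δ x)).toLinearMap ∘ₗ (ContinuousLinearMap.apply ℂ l2M (δ w)).toLinearMap

lemma matrixCoeff_apply (x w : M2) (T : l2M →L[ℂ] l2M) :
    matrixCoeff x w T = inner ℂ (δ x) (T (δ w)) :=
  rfl

open ContinuousLinearMap

section
variable {R : M2 → (l2M →L[ℂ] l2M)} (hR : ∀ u w : M2, R u (δ w) = δ (w * u))
include hR

lemma adjoint_apply_δ_mul (v c : M2) : adjoint (R v) (δ (c * v)) = δ c := by
  ext z
  rw [← inner_δ_left, adjoint_inner_right, hR, inner_δ_left, δ_apply, δ_apply]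
  simp only [mul_left_inj]

lemma adjoint_apply_δ_eq_zero {v w : M2} (h : ∀ c, w ≠ c * v) : adjoint (R v) (δ w) = 0 := by
  ext z
  rw [← inner_δ_left, adjoint_inner_right, hR, inner_δ_left, δ_apply, if_neg (h z).symm]
  rfl

open Classical in
lemma matrixCoeff_mul_adjoint (u v x w : M2) :
    matrixCoeff x w (R u * adjoint (R v)) = if ∃ c, w = c * v ∧ x = c * u then 1 else 0 := by
  rw [matrixCoeff_apply, mul_apply_eq_comp]
  by_cases hw : ∃ c, w = c * v
  · obtain ⟨c, rfl⟩ := hw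
    simp only [adjoint_apply_δ_mul hR, hR, inner_δ_left, δ_apply, mul_left_inj, exists_eq_left']
  · simp only [not_exists] at hw
    rw [adjoint_apply_δ_eq_zero hR hw, map_zero, inner_zero_right, if_neg]
    rintro ⟨c, hc, -⟩
    exact hw c hc

end

open ContinuousLinearMap in
/-- The family of operators `(R_u R_v*)` on `ℓ²(M)`, indexed by pairs of words
`(u, v) ∈ M × M`, is linearly independent in `B(ℓ²(M))`. -/
theorem stmt13 (R : M2 → (l2M →L[ℂ] l2M))
    (hR : ∀ u w : M2, R u (δ w) = δ (w * u)) :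
    LinearIndependent ℂ (fun p : M2 × M2 => R p.1 * adjoint (R p.2)) := by
  classical
  refine linearIndependent_of_triangular _ (fun q => matrixCoeff q.1 q.2)
    (fun q => q.1.length + q.2.length) (fun q => ?_) (fun q r hqr => ?_)
  · rw [matrixCoeff_mul_adjoint hR, if_pos ⟨1, (one_mul _).symm, (one_mul _).symm⟩]
    exact one_ne_zero
  · rw [matrixCoeff_mul_adjoint hR, ne_eq, ite_eq_right_iff, not_forall] at hqr
    obtain ⟨⟨c, h2, h1⟩, -⟩ := hqr
    rcases FreeMonoid.eq_one_or_length_lt_length_mul c r.1 with rfl | h1lt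
    · left
      rw [one_mul] at h1 h2
      exact Prod.ext h1.symm h2.symm
    · right
      have h2le : r.2.length ≤ (c * r.2).length := by rw [FreeMonoid.length_mul]; omega
      rw [h1, h2]
      omega
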